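/- Assume (H) and $\mathcal{R}_0=H'(0)G'(0)/(ab)>1$, and let $(u^*,v^*)$ be the unique positive root of $au=H(v)$, $bv=G(u)$. Then there exists $\varepsilon_1>0$ such that for every $\varepsilon\in[0,\varepsilon_1)$ the perturbed system $(a-\varepsilon)u=H(v)$, $(b-\varepsilon)v=G(u)$ has a unique positive root $(u^*_\varepsilon,v^*_\varepsilon)$, and the maps $\varepsilon\mapsto u^*_\varepsilon$ and $\varepsilon\mapsto v^*_\varepsilon$ are strictly increasing on $[0,\varepsilon_1)$. -/

import Mathlib

/-!
Writing `c = a - ε`, `d = b - ε` and eliminating `u = H v / c` turns the system into the scalar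
equation `Φ v = d * v` for `Φ v = G (H v / c)`, which again vanishes at `0` and is increasing and
strictly concave. So `Φ v / v` is strictly decreasing on `(0, ∞)`, which gives uniqueness. It tends
to `Φ'(0) = H'(0) G'(0) / c > d` as `v → 0⁺` and stays below `d` at `ẑ` for small `ε` by continuity,
which gives existence. Increasing `ε` enlarges `Φ` and lowers `d`, so the root `v` moves right, and
`u = H v / c` increases with it.
-/

open Set Filter Topology

theorem StrictConcaveOn.div_const {s : Set ℝ} {f : ℝ → ℝ} (hf : StrictConcaveOn ℝ s f)
    {c : ℝ} (hc : 0 < c) : StrictConcaveOn ℝ s (fun x => f x / c) := by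
  refine ⟨hf.1, fun x hx y hy hxy α β hα hβ hαβ => ?_⟩
  have h := hf.2 hx hy hxy hα hβ hαβ
  simp only [smul_eq_mul] at h ⊢
  rw [← mul_div_assoc, ← mul_div_assoc, ← add_div]
  exact div_lt_div_of_pos_right h hc

theorem exists_pos_eq_mul_of_hasDerivWithinAt {F : ℝ → ℝ} {L d z : ℝ}
    (hF : ContinuousOn F (Ioi 0)) (h0 : F 0 = 0) (hF' : HasDerivWithinAt F L (Ioi 0) 0)
    (hdL : d < L) (hz : 0 < z) (hFz : F z < d * z) : ∃ v, 0 < v ∧ F v = d * v := by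
  have hslope : ∀ᶠ v in 𝓝[>] 0, d < F v / v := by
    have := (hasDerivWithinAt_iff_tendsto_slope' (lt_irrefl 0)).1 hF'
    filter_upwards [this.eventually (eventually_gt_nhds hdL)] with v hv
    simpa [slope_def_field, h0] using hv
  obtain ⟨v₀, hv₀, hv₀z, hv₀pos⟩ := (hslope.and ((eventually_lt_nhds hz).filter_mono
    nhdsWithin_le_nhds |>.and self_mem_nhdsWithin)).exists
  have hsub : Icc v₀ z ⊆ Ioi 0 := fun x hx => hv₀pos.trans_le hx.1
  obtain ⟨v, hv, hFv⟩ := intermediate_value_Ioo' hv₀z.le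
    ((hF.mono hsub).sub (continuousOn_const.mul continuousOn_id))
    (show (0 : ℝ) ∈ Ioo (F z - d * z) (F v₀ - d * v₀) from
      ⟨by linarith, by linarith [(lt_div_iff₀ hv₀pos).1 hv₀]⟩)
  exact ⟨v, hv₀pos.trans hv.1, sub_eq_zero.1 hFv⟩

-- What hypothesis (H) provides for each of the two nonlinearities `H` and `G`.
structure IsConcaveIncidence (F : ℝ → ℝ) : Prop where
  map_zero : F 0 = 0
  continuousOn : ContinuousOn F (Ici 0)
  strictMonoOn : StrictMonoOn F (Ici 0)
  strictConcaveOn : StrictConcaveOn ℝ (Ici 0) F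
  differentiableAt_zero : DifferentiableAt ℝ F 0

namespace IsConcaveIncidence

variable {F F' G H : ℝ → ℝ}

theorem of_deriv_pos_of_deriv2_neg (hF : ContinuousOn F (Ici 0)) (h0 : F 0 = 0)
    (h' : ∀ z : ℝ, 0 ≤ z → 0 < deriv F z)
    (h'' : ∀ z : ℝ, 0 < z → deriv (deriv F) z < 0) :
    IsConcaveIncidence F where
  map_zero := h0
  continuousOn := hF
  strictMonoOn := strictMonoOn_of_deriv_pos (convex_Ici 0) hF fun x hx =>
    h' x (le_of_lt (by simpa using hx))
  strictConcaveOn := strictConcaveOn_of_deriv2_neg (convex_Ici 0) hF fun x hx =>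
    by simpa using h'' x (by simpa using hx)
  differentiableAt_zero := differentiableAt_of_deriv_ne_zero (h' 0 le_rfl).ne'

theorem nonneg (hF : IsConcaveIncidence F) {x : ℝ} (hx : 0 ≤ x) : 0 ≤ F x :=
  hF.map_zero ▸ hF.strictMonoOn.monotoneOn self_mem_Ici hx hx

theorem pos (hF : IsConcaveIncidence F) {x : ℝ} (hx : 0 < x) : 0 < F x :=
  hF.map_zero ▸ hF.strictMonoOn self_mem_Ici hx.le hx

theorem strictAntiOn_div_self (hF : IsConcaveIncidence F) :
    StrictAntiOn (fun x => F x / x) (Ioi 0) := fun x hx y hy hxy => by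
  simpa [hF.map_zero] using hF.strictConcaveOn.secant_strict_mono self_mem_Ici
    (mem_Ioi.1 hx).le (mem_Ioi.1 hy).le (ne_of_gt hx) (ne_of_gt hy) hxy

theorem eq_of_eq_mul (hF : IsConcaveIncidence F) {d v w : ℝ} (hv : 0 < v) (hw : 0 < w)
    (hFv : F v = d * v) (hFw : F w = d * w) : v = w :=
  hF.strictAntiOn_div_self.injOn hv hw <| by
    simp only [hFv, hFw, mul_div_cancel_right₀ _ hv.ne', mul_div_cancel_right₀ _ hw.ne']

theorem lt_of_eq_mul (hF' : IsConcaveIncidence F') {d d' v v' : ℝ} (hv : 0 < v) (hv' : 0 < v')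
    (hFv : F v = d * v) (hF'v' : F' v' = d' * v') (hFF' : F v ≤ F' v) (hd : d' < d) :
    v < v' := by
  refine (StrictAntiOn.lt_iff_gt hF'.strictAntiOn_div_self hv' hv).1 ?_
  calc F' v' / v' = d' := by rw [hF'v', mul_div_cancel_right₀ _ hv'.ne']
    _ < d := hd
    _ = F v / v := by rw [hFv, mul_div_cancel_right₀ _ hv.ne']
    _ ≤ F' v / v := div_le_div_of_nonneg_right hFF' hv.le

theorem hasDerivAt_comp_div (hG : IsConcaveIncidence G) (hH : IsConcaveIncidence H) (c : ℝ) :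
    HasDerivAt (fun v => G (H v / c)) (deriv G 0 * (deriv H 0 / c)) 0 := by
  have hG' : HasDerivAt G (deriv G 0) (H 0 / c) := by
    simpa [hH.map_zero] using hG.differentiableAt_zero.hasDerivAt
  exact hG'.comp 0 (hH.differentiableAt_zero.hasDerivAt.div_const c)

theorem comp_div (hG : IsConcaveIncidence G) (hH : IsConcaveIncidence H) {c : ℝ} (hc : 0 < c) :
    IsConcaveIncidence (fun v => G (H v / c)) := by
  have hmaps : MapsTo (fun v => H v / c) (Ici 0) (Ici 0) := fun v hv =>
    div_nonneg (hH.nonneg hv) hc.le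
  have hcont : ContinuousOn (fun v => H v / c) (Ici 0) := hH.continuousOn.div_const c
  have hmono : StrictMonoOn (fun v => H v / c) (Ici 0) := fun x hx y hy hxy =>
    div_lt_div_of_pos_right (hH.strictMonoOn hx hy hxy) hc
  have himg : (fun v => H v / c) '' Ici 0 ⊆ Ici 0 := hmaps.image_subset
  have hGimg : ConcaveOn ℝ ((fun v => H v / c) '' Ici 0) G :=
    hG.strictConcaveOn.concaveOn.subset himg (isPreconnected_Ici.image _ hcont).ordConnected.convex
  exact
    { map_zero := by simp [hH.map_zero, hG.map_zero]
      continuousOn := hG.continuousOn.comp hcont hmaps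
      strictMonoOn := hG.strictMonoOn.comp hmono hmaps
      strictConcaveOn :=
        hGimg.comp_strictConcaveOn (hH.strictConcaveOn.div_const hc) (hG.strictMonoOn.mono himg)
      differentiableAt_zero := (hasDerivAt_comp_div hG hH c).differentiableAt }

theorem exists_pos_comp_div_eq_mul (hG : IsConcaveIncidence G) (hH : IsConcaveIncidence H)
    {c d z : ℝ} (hc : 0 < c) (hcd : c * d < deriv H 0 * deriv G 0) (hz : 0 < z)
    (hzd : G (H z / c) < d * z) : ∃ v, 0 < v ∧ G (H v / c) = d * v := by
  have hΦ := hG.comp_div hH hc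
  refine exists_pos_eq_mul_of_hasDerivWithinAt (hΦ.continuousOn.mono Ioi_subset_Ici_self)
    hΦ.map_zero (hG.hasDerivAt_comp_div hH c).hasDerivWithinAt ?_ hz hzd
  rw [← mul_div_assoc, lt_div_iff₀ hc]
  linarith

theorem lt_of_comp_div_eq_mul (hG : IsConcaveIncidence G) (hH : IsConcaveIncidence H)
    {c c' d d' v v' : ℝ} (hc' : 0 < c') (hcc' : c' < c) (hdd' : d' < d) (hv : 0 < v)
    (hv' : 0 < v') (hroot : G (H v / c) = d * v) (hroot' : G (H v' / c') = d' * v') :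
    v < v' := by
  have hHv := hH.nonneg hv.le
  have hshift : G (H v / c) ≤ G (H v / c') :=
    hG.strictMonoOn.monotoneOn (div_nonneg hHv (hc'.trans hcc').le) (div_nonneg hHv hc'.le)
      (div_le_div_of_nonneg_left hHv hc' hcc'.le)
  exact (hG.comp_div hH hc').lt_of_eq_mul (F := fun v => G (H v / c)) hv hv' hroot hroot'
    hshift hdd'

end IsConcaveIncidence

theorem exists_pos_forall_Ico_lt_sub {G : ℝ → ℝ} {a b w z : ℝ} (ha : 0 < a) (hb : 0 < b)
    (hG : ContinuousAt G (w / a)) (hlt : G (w / a) < b * z) :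
    ∃ ε1 > 0, ∀ ε ∈ Ico 0 ε1, ε < a ∧ ε < b ∧ G (w / (a - ε)) < (b - ε) * z := by
  have hcont : ContinuousAt (fun ε => G (w / (a - ε))) 0 :=
    ContinuousAt.comp (by simpa using hG)
      (continuousAt_const.div (continuousAt_const.sub continuousAt_id) (by simpa using ha.ne'))
  have hev : ∀ᶠ ε in 𝓝 (0 : ℝ), ε < a ∧ ε < b ∧ G (w / (a - ε)) < (b - ε) * z :=
    (eventually_lt_nhds ha).and <| (eventually_lt_nhds hb).and <|
      hcont.eventually_lt (by fun_prop) (by simpa using hlt)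
  obtain ⟨ε1, hε1, h⟩ := Metric.eventually_nhds_iff.1 hev
  refine ⟨ε1, hε1, fun ε hε => h ?_⟩
  rw [Real.dist_eq, sub_zero, abs_of_nonneg hε.1]
  exact hε.2

theorem stmt5_general (a b : ℝ) (ha : 0 < a) (hb : 0 < b) (H G : ℝ → ℝ)
    (hHreg : ContDiffOn ℝ 2 H (Set.Ici 0)) (hGreg : ContDiffOn ℝ 2 G (Set.Ici 0))
    (hH0 : H 0 = 0) (hG0 : G 0 = 0)
    (hH' : ∀ z : ℝ, 0 ≤ z → 0 < deriv H z) (hG' : ∀ z : ℝ, 0 ≤ z → 0 < deriv G z)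
    (hH'' : ∀ z : ℝ, 0 < z → deriv (deriv H) z < 0)
    (hG'' : ∀ z : ℝ, 0 < z → deriv (deriv G) z < 0)
    (hhat : ∃ zhat : ℝ, 0 < zhat ∧ G (H zhat / a) < b * zhat)
    (hR0 : a * b < deriv H 0 * deriv G 0) :
    ∃ ε1 : ℝ, 0 < ε1 ∧ ∃ U V : ℝ → ℝ,
      (∀ ε ∈ Set.Ico (0 : ℝ) ε1,
        (0 < U ε ∧ 0 < V ε ∧ (a - ε) * U ε = H (V ε) ∧ (b - ε) * V ε = G (U ε)) ∧
        (∀ p q : ℝ, 0 < p → 0 < q → (a - ε) * p = H q → (b - ε) * q = G p →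
          p = U ε ∧ q = V ε)) ∧
      StrictMonoOn U (Set.Ico 0 ε1) ∧ StrictMonoOn V (Set.Ico 0 ε1) := by
  obtain ⟨z, hz, hzlt⟩ := hhat
  have hH := IsConcaveIncidence.of_deriv_pos_of_deriv2_neg hHreg.continuousOn hH0 hH' hH''
  have hG := IsConcaveIncidence.of_deriv_pos_of_deriv2_neg hGreg.continuousOn hG0 hG' hG''
  obtain ⟨ε1, hε1, hsmall⟩ := exists_pos_forall_Ico_lt_sub ha hb
    (hG.continuousOn.continuousAt (Ici_mem_nhds (div_pos (hH.pos hz) ha))) hzlt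
  have hc : ∀ ε ∈ Ico 0 ε1, 0 < a - ε := fun ε hε => sub_pos.2 (hsmall ε hε).1
  have hroot : ∀ ε ∈ Ico 0 ε1, ∃ v, 0 < v ∧ G (H v / (a - ε)) = (b - ε) * v :=
    fun ε hε => hG.exists_pos_comp_div_eq_mul hH (hc ε hε)
      (by nlinarith [hε.1, (hsmall ε hε).1, (hsmall ε hε).2.1]) hz (hsmall ε hε).2.2
  choose! V hVpos hV using hroot
  have hVmono : StrictMonoOn V (Ico 0 ε1) := fun ε hε ε' hε' hlt =>
    hG.lt_of_comp_div_eq_mul hH (hc ε' hε') (by linarith) (by linarith) (hVpos ε hε)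
      (hVpos ε' hε') (hV ε hε) (hV ε' hε')
  refine ⟨ε1, hε1, fun ε => H (V ε) / (a - ε), V, fun ε hε => ⟨?_, ?_⟩, ?_, hVmono⟩
  · exact ⟨div_pos (hH.pos (hVpos ε hε)) (hc ε hε), hVpos ε hε,
      by field_simp [(hc ε hε).ne'], (hV ε hε).symm⟩
  · intro p q hp hq hpq hqp
    have hp' : p = H q / (a - ε) := by rw [eq_div_iff (hc ε hε).ne']; linarith
    have hqV : q = V ε := (hG.comp_div hH (hc ε hε)).eq_of_eq_mul hq (hVpos ε hε)
      (by rw [← hp', hqp]) (hV ε hε)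
    exact ⟨hp'.trans (by rw [hqV]), hqV⟩
  · intro ε hε ε' hε' hlt
    have hHV := hH.strictMonoOn (hVpos ε hε).le (hVpos ε' hε').le (hVmono hε hε' hlt)
    exact div_lt_div₀ hHV (by linarith) (hH.nonneg (hVpos ε' hε').le) (hc ε' hε')

/-- Under (H) and `R₀ > 1`, for all small `ε ≥ 0` the perturbed system
`(a-ε)u = H(v)`, `(b-ε)v = G(u)` has a unique positive root `(u*_ε, v*_ε)`,
strictly increasing in `ε`. -/
theorem stmt5 (a b : ℝ) (ha : 0 < a) (hb : 0 < b) (H G : ℝ → ℝ)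
    (hHreg : ContDiffOn ℝ 2 H (Set.Ici 0)) (hGreg : ContDiffOn ℝ 2 G (Set.Ici 0))
    (hH0 : H 0 = 0) (hG0 : G 0 = 0)
    (hH' : ∀ z : ℝ, 0 ≤ z → 0 < deriv H z) (hG' : ∀ z : ℝ, 0 ≤ z → 0 < deriv G z)
    (hH'' : ∀ z : ℝ, 0 < z → deriv (deriv H) z < 0)
    (hG'' : ∀ z : ℝ, 0 < z → deriv (deriv G) z < 0)
    (hhat : ∃ zhat : ℝ, 0 < zhat ∧ G (H zhat / a) < b * zhat)
    (hR0 : a * b < deriv H 0 * deriv G 0)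
    (ustar vstar : ℝ) (hu : 0 < ustar) (hv : 0 < vstar)
    (heq1 : a * ustar = H vstar) (heq2 : b * vstar = G ustar)
    (huniq : ∀ p q : ℝ, 0 < p → 0 < q → a * p = H q → b * q = G p →
      p = ustar ∧ q = vstar) :
    ∃ ε1 : ℝ, 0 < ε1 ∧ ∃ U V : ℝ → ℝ,
      (∀ ε ∈ Set.Ico (0 : ℝ) ε1,
        (0 < U ε ∧ 0 < V ε ∧ (a - ε) * U ε = H (V ε) ∧ (b - ε) * V ε = G (U ε)) ∧
        (∀ p q : ℝ, 0 < p → 0 < q → (a - ε) * p = H q → (b - ε) * q = G p →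
          p = U ε ∧ q = V ε)) ∧
      StrictMonoOn U (Set.Ico 0 ε1) ∧ StrictMonoOn V (Set.Ico 0 ε1) :=
  stmt5_general a b ha hb H G hHreg hGreg hH0 hG0 hH' hG' hH'' hG'' hhat hR0
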